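/- Let F(z) = 1 - 4dz + 4z^(p+1) where d is a positive integer and p >= 1. If the power series expansion of (1 - sqrt(F(z)))/(2z) around 0 has nonnegative coefficients and radius of convergence at least 1/(4d), and F(1/(4d)) > 0, then F has no complex root of modulus 1/(4d). -/
import Mathlib

open Complex Set Filter Topology

/-- Pringsheim-type argument: if `(1 - sqrt(F z))/(2z)` has a power series expansion around `0`
with nonnegative coefficients and radius of convergence at least `1/(4d)`, and
`F (1/(4d)) > 0`, then `F z = 1 - 4dz + 4z^(p+1)` has no complex root of modulus `1/(4d)`. -/
theorem no_root_on_circle (d p : ℕ) (hd : 0 < d) (hp : 1 ≤ p)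
    (F : ℂ → ℂ) (hF : ∀ z, F z = 1 - 4 * d * z + 4 * z ^ (p + 1))
    (g : ℕ → ℝ) (hg : ∀ n, 0 ≤ g n)
    (hexp : ∀ z : ℂ, 0 < ‖z‖ → ‖z‖ < 1 / (4 * d) →
      HasSum (fun n => (g n : ℂ) * z ^ n) ((1 - (F z) ^ ((1 : ℂ) / 2)) / (2 * z)))
    (hpos : 0 < (F (1 / (4 * d))).re) :
    ∀ z : ℂ, ‖z‖ = 1 / (4 * d) → F z ≠ 0 := by
  intro z₀ hz₀ hFz₀
  set r : ℝ := 1 / (4 * d) with hr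
  have hrpos : 0 < r := by
    rw [hr]; positivity
  set f : ℝ → ℝ := fun x => 1 - 4 * d * x + 4 * x ^ (p + 1) with hfdef
  have hfpos : ∀ x : ℝ, 0 < x → x ≤ r → 0 < f x := by
    intro x hx hxr
    have h4d : (0:ℝ) < 4 * d := by positivity
    have h1 : 4 * (d:ℝ) * x ≤ 1 := by
      rw [hr] at hxr
      rw [show (1:ℝ) = 4 * d * (1 / (4 * d)) by field_simp]
      nlinarith
    have h2 : (0:ℝ) < 4 * x ^ (p + 1) := by positivity
    simp only [hfdef]; nlinarith
  -- real value of F at a nonnegative real point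
  have hFreal : ∀ x : ℝ, F (x : ℂ) = ((f x : ℝ) : ℂ) := by
    intro x
    rw [hF]
    simp only [hfdef]
    push_cast
    ring
  -- key estimate: f ‖z‖ ≤ ‖F z‖ for 0 < ‖z‖ < r
  have key : ∀ z : ℂ, 0 < ‖z‖ → ‖z‖ < r → f ‖z‖ ≤ ‖F z‖ := by
    intro z hz1 hz2
    set x : ℝ := ‖z‖ with hx
    have hxpos : 0 < x := hz1
    have hfx : 0 < f x := hfpos x hxpos hz2.le
    have hzne : z ≠ 0 := norm_pos_iff.mp hz1
    -- cpow of the real value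
    have hcpow : (F (x : ℂ)) ^ ((1 : ℂ)/2) = ((Real.sqrt (f x) : ℝ) : ℂ) := by
      rw [hFreal, Real.sqrt_eq_rpow]
      rw [show ((1:ℂ)/2) = (((1:ℝ)/2 : ℝ) : ℂ) by push_cast; ring]
      exact (Complex.ofReal_cpow hfx.le _).symm
    -- real HasSum at x
    have hsx := hexp (x : ℂ) (by simpa [abs_of_pos hxpos] using hxpos)
      (by simpa [abs_of_pos hxpos] using hz2)
    rw [hcpow] at hsx
    have heq : ((1 : ℂ) - ((Real.sqrt (f x) : ℝ) : ℂ)) / (2 * (x:ℂ))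
        = (((1 - Real.sqrt (f x)) / (2 * x) : ℝ) : ℂ) := by push_cast; ring
    rw [heq] at hsx
    have hterm : (fun n => (g n : ℂ) * (x:ℂ) ^ n)
        = fun n => (((g n * x ^ n : ℝ)) : ℂ) := by
      funext n; push_cast; ring
    rw [hterm] at hsx
    have hSreal : HasSum (fun n => g n * x ^ n) ((1 - Real.sqrt (f x)) / (2 * x)) :=
      Complex.hasSum_ofReal.mp hsx
    -- HasSum of norms at z
    have hsz := hexp z hz1 hz2
    have hnormterm : (fun n => ‖(g n : ℂ) * z ^ n‖) = fun n => g n * x ^ n := by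
      funext n
      rw [norm_mul, norm_pow, Complex.norm_real, Real.norm_eq_abs, _root_.abs_of_nonneg (hg n)]
    have hSnorm : HasSum (fun n => ‖(g n : ℂ) * z ^ n‖) ((1 - Real.sqrt (f x)) / (2 * x)) := by
      rw [hnormterm]; exact hSreal
    have hbound : ‖(1 - (F z) ^ ((1 : ℂ)/2)) / (2 * z)‖ ≤ (1 - Real.sqrt (f x)) / (2 * x) := by
      rw [← hsz.tsum_eq, ← hSnorm.tsum_eq]
      exact norm_tsum_le_tsum_norm hSnorm.summable
    -- multiply by ‖2z‖ = 2x
    have h2z : ‖(2 : ℂ) * z‖ = 2 * x := by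
      rw [norm_mul]; simp [hx]
    have hsub : ‖(1 : ℂ) - (F z) ^ ((1 : ℂ)/2)‖ ≤ 1 - Real.sqrt (f x) := by
      have heq2 : (1 : ℂ) - (F z) ^ ((1 : ℂ)/2)
          = (2 * z) * ((1 - (F z) ^ ((1 : ℂ)/2)) / (2 * z)) := by
        field_simp
      rw [heq2, norm_mul, h2z]
      calc 2 * x * ‖(1 - F z ^ ((1:ℂ)/2)) / (2 * z)‖
          ≤ 2 * x * ((1 - Real.sqrt (f x)) / (2 * x)) := by
            apply mul_le_mul_of_nonneg_left hbound (by positivity)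
        _ = 1 - Real.sqrt (f x) := by field_simp
    have hlow : Real.sqrt (f x) ≤ ‖(F z) ^ ((1 : ℂ)/2)‖ := by
      have := norm_sub_norm_le (1 : ℂ) ((1 : ℂ) - (F z) ^ ((1 : ℂ)/2))
      simp only [norm_one, sub_sub_cancel] at this
      linarith
    -- square it
    by_cases hFzne : F z = 0
    · exfalso
      rw [hFzne, Complex.zero_cpow (by norm_num : ((1:ℂ)/2) ≠ 0)] at hlow
      simp at hlow
      have := Real.sqrt_pos.mpr hfx
      linarith
    · have hsq : ‖(F z) ^ ((1 : ℂ)/2)‖ ^ 2 = ‖F z‖ := by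
        rw [← norm_pow, sq, ← Complex.cpow_add _ _ hFzne]
        norm_num
      calc f x = Real.sqrt (f x) ^ 2 := (Real.sq_sqrt hfx.le).symm
        _ ≤ ‖(F z) ^ ((1 : ℂ)/2)‖ ^ 2 := by
            apply pow_le_pow_left₀ (Real.sqrt_nonneg _) hlow
        _ = ‖F z‖ := hsq
  -- pass to the limit along the segment t • z₀, t → 1⁻
  have hz₀pos : 0 < ‖z₀‖ := by rw [hz₀]; exact hrpos
  have hFc : Continuous F := by
    have : F = fun z : ℂ => 1 - 4 * d * z + 4 * z ^ (p + 1) := funext hF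
    rw [this]; fun_prop
  have hfc : Continuous f := by
    simp only [hfdef]; fun_prop
  have ht1 : Tendsto (fun t : ℝ => ‖F ((t : ℂ) * z₀)‖) (𝓝[<] (1:ℝ)) (𝓝 0) := by
    have : Tendsto (fun t : ℝ => ‖F ((t : ℂ) * z₀)‖) (𝓝 (1:ℝ)) (𝓝 ‖F ((1:ℂ) * z₀)‖) := by
      apply Continuous.tendsto
      exact hFc.comp (by fun_prop) |>.norm
    rw [one_mul, hFz₀, norm_zero] at this
    exact this.mono_left nhdsWithin_le_nhds
  have ht2 : Tendsto (fun t : ℝ => f (t * r)) (𝓝[<] (1:ℝ)) (𝓝 (f r)) := by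
    have : Tendsto (fun t : ℝ => f (t * r)) (𝓝 (1:ℝ)) (𝓝 (f (1 * r))) :=
      (hfc.comp (by fun_prop)).tendsto 1
    rw [one_mul] at this
    exact this.mono_left nhdsWithin_le_nhds
  have hev : ∀ᶠ t in 𝓝[<] (1:ℝ), f (t * r) ≤ ‖F ((t : ℂ) * z₀)‖ := by
    filter_upwards [Ioo_mem_nhdsLT_of_mem (⟨zero_lt_one, le_rfl⟩ : (1:ℝ) ∈ Ioc (0:ℝ) 1)]
      with t ht
    have htr : ‖(t : ℂ) * z₀‖ = t * r := by
      rw [norm_mul, hz₀, Complex.norm_real, Real.norm_eq_abs, abs_of_pos ht.1]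
    have h1 : 0 < ‖(t : ℂ) * z₀‖ := by rw [htr]; exact mul_pos ht.1 hrpos
    have h2 : ‖(t : ℂ) * z₀‖ < r := by
      rw [htr]; nlinarith [ht.2, hrpos]
    have := key _ h1 h2
    rwa [htr] at this
  have hfr : f r ≤ 0 := le_of_tendsto_of_tendsto ht2 ht1 hev
  exact absurd hfr (not_le.mpr (hfpos r hrpos le_rfl))
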